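/- Let z₁,…,zₙ be nonzero complex numbers satisfying the twist-knot hyperbolicity equations (as in the paper's equations (4),(5),(6)). Then zₙ = 1 + (1 − 1/z₁)². -/

import Mathlib

/-- The twist-knot hyperbolicity equations (4),(5),(6) for `C(2,n+1)`, for
nonzero complex numbers `z 1, …, z n`. -/
def TwistSol (n : ℕ) (z : ℕ → ℂ) : Prop :=
  (∀ k, 1 ≤ k → k ≤ n → z k ≠ 0) ∧
  (1 - z 1 / z 2 = 1 - 1 / z 1 - z 1 + 1) ∧
  (∀ k, 2 ≤ k → k ≤ n - 1 →
    1 - z k / z (k + 1) + 1 / z (k + 1) - 1 / z k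
      = 1 - z (k - 1) / z k - z k + z (k - 1)) ∧
  (1 - 1 / z n = 1 - z (n - 1) / z n - z n + z (n - 1))

/-! Subtracting `z k + 1 / z k` from both sides of the `k`-th equation turns the middle
equations into `Φ k = Φ (k - 1)` for `Φ k := z k + (1 - z k) / z (k + 1)`, the last one into
`z n = Φ (n - 1)`, and the first one, which also expresses `1 / z 2` through `z 1`, into
`Φ 1 = 1 + (1 - 1 / z 1) ^ 2`. This is the paper's summation of all equations. -/

section TwistInvariant

variable {K : Type*} [Field K] {z : ℕ → K}

def twistInvariant (z : ℕ → K) (k : ℕ) : K := z k + (1 - z k) / z (k + 1)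

theorem twistInvariant_one_eq (h : 1 - z 1 / z 2 = 1 - 1 / z 1 - z 1 + 1) :
    twistInvariant z 1 = 1 + (1 - 1 / z 1) ^ 2 := by
  have hz₁ : z 1 ≠ 0 := by
    rintro hz₁
    simp [hz₁] at h
  unfold twistInvariant
  linear_combination (1 - 1 / z 1) * h + (1 - 1 / z 2) * mul_inv_cancel₀ hz₁

theorem twistInvariant_succ_eq {k : ℕ}
    (h : 1 - z (k + 1) / z (k + 2) + 1 / z (k + 2) - 1 / z (k + 1)
      = 1 - z k / z (k + 1) - z (k + 1) + z k) :
    twistInvariant z (k + 1) = twistInvariant z k := by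
  unfold twistInvariant
  linear_combination h

theorem eq_twistInvariant {k : ℕ} (h : 1 - 1 / z (k + 1) = 1 - z k / z (k + 1) - z (k + 1) + z k) :
    z (k + 1) = twistInvariant z k := by
  unfold twistInvariant
  linear_combination h

end TwistInvariant

theorem TwistSol.twistInvariant_eq_one {n : ℕ} {z : ℕ → ℂ} (hz : TwistSol n z) :
    ∀ k, 1 ≤ k → k + 1 ≤ n → twistInvariant z k = twistInvariant z 1 := by
  intro k hk
  induction k, hk using Nat.le_induction with
  | base => exact fun _ => rfl
  | succ k hk ih =>
    intro hkn
    have h := hz.2.2.1 (k + 1) (by omega) (by omega)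
    rw [Nat.add_sub_cancel] at h
    rw [twistInvariant_succ_eq h, ih (by omega)]

/-- any solution of the twist-knot hyperbolicity equations
satisfies `zₙ = 1 + (1 − 1/z₁)²`. -/
theorem stmt_9 (n : ℕ) (hn : 2 ≤ n) (z : ℕ → ℂ) (hz : TwistSol n z) :
    z n = 1 + (1 - 1 / z 1) ^ 2 := by
  obtain ⟨m, rfl⟩ : ∃ m, n = m + 1 := ⟨n - 1, by omega⟩
  have hlast := hz.2.2.2
  rw [Nat.add_sub_cancel] at hlast
  rw [eq_twistInvariant hlast, hz.twistInvariant_eq_one m (by omega) le_rfl,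
    twistInvariant_one_eq hz.2.1]
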